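/- Let T : H_X → H_Y be a quasi-proper bounded operator between coarse geometric modules (for every bounded measurable B ⊆ Y and ε > 0 there is bounded measurable A ⊆ X with ‖χ_B T (1 − χ_A)‖ ≤ ε). Then Ad(T) maps locally compact operators on H_X to locally compact operators on H_Y: if t ∈ B(H_X) satisfies that χ_A t and t χ_A are compact for all bounded measurable A, then χ_B (T t T*) and (T t T*) χ_B are compact for all bounded measurable B. -/
import Mathlib


open ContinuousLinearMap Filter Topology

/-- Composition of relations. -/
def relComp {X Y Z : Type*} (S : Set (Z × Y)) (R : Set (Y × X)) : Set (Z × X) :=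
  {p | ∃ y, (p.1, y) ∈ S ∧ (y, p.2) ∈ R}

/-- Transposition of a relation. -/
def relOp {X Y : Type*} (R : Set (Y × X)) : Set (X × Y) := {p | (p.2, p.1) ∈ R}

/-- Image of a set under a relation: `R(A) = {y | ∃ x ∈ A, (y,x) ∈ R}`. -/
def relImage {X Y : Type*} (R : Set (Y × X)) (A : Set X) : Set Y :=
  {y | ∃ x ∈ A, (y, x) ∈ R}

/-- A coarse structure on a set `X`. -/
structure CoarseStructure (X : Type*) where
  ents : Set (Set (X × X))
  mem_of_subset : ∀ {E F : Set (X × X)}, E ∈ ents → F ⊆ E → F ∈ ents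
  union_mem : ∀ {E F : Set (X × X)}, E ∈ ents → F ∈ ents → E ∪ F ∈ ents
  diag_mem : {p : X × X | p.1 = p.2} ∈ ents
  op_mem : ∀ {E : Set (X × X)}, E ∈ ents → relOp E ∈ ents
  comp_mem : ∀ {E F : Set (X × X)}, E ∈ ents → F ∈ ents → relComp E F ∈ ents

/-- A coarse geometric module for a coarse space `(X, 𝓔)`: a Hilbert space `H` together with
a nondegenerate unital representation of a unital Boolean algebra of subsets of `X` by
orthogonal projections. -/
structure CoarseModule {X : Type*} (𝓔 : CoarseStructure X) (H : Type*)
    [NormedAddCommGroup H] [InnerProductSpace ℂ H] [CompleteSpace H] where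
  meas : Set (Set X)
  univ_mem : Set.univ ∈ meas
  inter_mem : ∀ {A B : Set X}, A ∈ meas → B ∈ meas → A ∩ B ∈ meas
  compl_mem : ∀ {A : Set X}, A ∈ meas → Aᶜ ∈ meas
  proj : Set X → H →L[ℂ] H
  proj_idem : ∀ A ∈ meas, IsIdempotentElem (proj A)
  proj_sa : ∀ A ∈ meas, IsSelfAdjoint (proj A)
  proj_inter : ∀ A ∈ meas, ∀ B ∈ meas, proj (A ∩ B) = (proj A).comp (proj B)
  proj_union : ∀ A ∈ meas, ∀ B ∈ meas, A ∩ B = ∅ → proj (A ∪ B) = proj A + proj B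
  proj_univ : proj Set.univ = 1
  nondegenerate : ∃ E ∈ 𝓔.ents, relOp E = E ∧ {p : X × X | p.1 = p.2} ⊆ E ∧
    (Submodule.span ℂ {v : H | ∃ A ∈ meas, A ×ˢ A ⊆ E ∧ v ∈ Set.range (proj A)}).topologicalClosure = ⊤

variable {X Y : Type*} {𝓔 : CoarseStructure X} {𝓕 : CoarseStructure Y}
  {HX HY : Type*}
  [NormedAddCommGroup HX] [InnerProductSpace ℂ HX] [CompleteSpace HX]
  [NormedAddCommGroup HY] [InnerProductSpace ℂ HY] [CompleteSpace HY]

/-- The support of an operator `t : H_X → H_Y` is contained in `S ⊆ Y × X` if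
`χ_B ∘ t ∘ χ_A = 0` for all measurable `A ⊆ X`, `B ⊆ Y` with `B ∩ S(A) = ∅`. -/
def SuppIn (MX : CoarseModule 𝓔 HX) (MY : CoarseModule 𝓕 HY)
    (t : HX →L[ℂ] HY) (S : Set (Y × X)) : Prop :=
  ∀ A ∈ MX.meas, ∀ B ∈ MY.meas, B ∩ relImage S A = ∅ →
    (MY.proj B).comp (t.comp (MX.proj A)) = 0

/-- A subset of a coarse space is bounded if it is `E`-bounded for some entourage `E`. -/
def IsBoundedSet {Z : Type*} (𝓖 : CoarseStructure Z) (A : Set Z) : Prop :=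
  ∃ E ∈ 𝓖.ents, A ×ˢ A ⊆ E

/-- `T : H_X → H_Y` is quasi-proper: for every bounded measurable `B ⊆ Y` and `ε > 0` there
is a bounded measurable `A ⊆ X` with `‖χ_B T (1 − χ_A)‖ ≤ ε`. -/
def QuasiProper (MX : CoarseModule 𝓔 HX) (MY : CoarseModule 𝓕 HY)
    (T : HX →L[ℂ] HY) : Prop :=
  ∀ B ∈ MY.meas, IsBoundedSet 𝓕 B → ∀ ε : ℝ, 0 < ε →
    ∃ A ∈ MX.meas, IsBoundedSet 𝓔 A ∧
      ‖((MY.proj B).comp T).comp (1 - MX.proj A)‖ ≤ ε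

/-- `t` is locally compact: `χ_A t` and `t χ_A` are compact for all bounded measurable `A`. -/
def LocallyCompactOp {Z : Type*} {𝓖 : CoarseStructure Z} {K : Type*}
    [NormedAddCommGroup K] [InnerProductSpace ℂ K] [CompleteSpace K]
    (M : CoarseModule 𝓖 K) (t : K →L[ℂ] K) : Prop :=
  ∀ A ∈ M.meas, IsBoundedSet 𝓖 A →
    IsCompactOperator ⇑((M.proj A).comp t) ∧ IsCompactOperator ⇑(t.comp (M.proj A))

set_option maxHeartbeats 1000000 in
/-- If `T : H_X → H_Y` is a quasi-proper bounded operator, then `Ad(T) = T · T*` maps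
locally compact operators on `H_X` to locally compact operators on `H_Y`. -/
theorem stmt16 (MX : CoarseModule 𝓔 HX) (MY : CoarseModule 𝓕 HY)
    (T : HX →L[ℂ] HY) (hT : QuasiProper MX MY T) :
    ∀ t : HX →L[ℂ] HX, LocallyCompactOp MX t →
      LocallyCompactOp MY ((T.comp t).comp (ContinuousLinearMap.adjoint T)) := by
  intro t ht B hBm hBb
  have hchoice : ∀ n : ℕ, ∃ A, A ∈ MX.meas ∧ IsBoundedSet 𝓔 A ∧
      ‖((MY.proj B).comp T).comp (1 - MX.proj A)‖ ≤ 1 / (n + 1) := by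
    intro n
    obtain ⟨A, h1, h2, h3⟩ := hT B hBm hBb (1 / (n + 1)) (by positivity)
    exact ⟨A, h1, h2, h3⟩
  choose A hAm hAb hAn using hchoice
  set T' := ContinuousLinearMap.adjoint T with hT'def
  have htend : Tendsto (fun n : ℕ => 1 / ((n : ℝ) + 1)) atTop (𝓝 0) :=
    tendsto_one_div_add_atTop_nhds_zero_nat
  -- self-adjointness of the projections involved
  have hPB : ContinuousLinearMap.adjoint (MY.proj B) = MY.proj B := by
    rw [← ContinuousLinearMap.star_eq_adjoint]; exact MY.proj_sa B hBm
  have hPA : ∀ n, ContinuousLinearMap.adjoint (1 - MX.proj (A n)) = 1 - MX.proj (A n) := by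
    intro n
    rw [← ContinuousLinearMap.star_eq_adjoint, star_sub, star_one,
      (MX.proj_sa (A n) (hAm n)).star_eq]
  constructor
  · -- χ_B ∘ (T t T*) is compact
    set f := (MY.proj B).comp ((T.comp t).comp T') with hf
    set F : ℕ → HY →L[ℂ] HY :=
      fun n => (((MY.proj B).comp T).comp ((MX.proj (A n)).comp t)).comp T' with hF
    have hFc : ∀ n, IsCompactOperator (F n) := by
      intro n
      have h1 : IsCompactOperator ⇑((MX.proj (A n)).comp t) := (ht (A n) (hAm n) (hAb n)).1
      have h2 := (h1.clm_comp ((MY.proj B).comp T)).comp_clm T'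
      have : ⇑(F n) = ⇑((MY.proj B).comp T) ∘ ⇑((MX.proj (A n)).comp t) ∘ ⇑T' := by
        ext v; simp [hF, ContinuousLinearMap.comp_apply]
      rw [this]; exact h2
    have hsub : ∀ n, f - F n =
        (((MY.proj B).comp T).comp (1 - MX.proj (A n))).comp (t.comp T') := by
      intro n
      ext v
      simp [hf, hF, ContinuousLinearMap.comp_apply, ContinuousLinearMap.sub_apply,
        map_sub]
    have hnorm : ∀ n, ‖f - F n‖ ≤ 1 / ((n : ℝ) + 1) * ‖t.comp T'‖ := by
      intro n
      rw [hsub n]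
      calc ‖(((MY.proj B).comp T).comp (1 - MX.proj (A n))).comp (t.comp T')‖
          ≤ ‖((MY.proj B).comp T).comp (1 - MX.proj (A n))‖ * ‖t.comp T'‖ :=
            ContinuousLinearMap.opNorm_comp_le _ _
        _ ≤ 1 / ((n : ℝ) + 1) * ‖t.comp T'‖ :=
            mul_le_mul_of_nonneg_right (hAn n) (norm_nonneg _)
    have hlim : Tendsto F atTop (𝓝 f) := by
      rw [tendsto_iff_norm_sub_tendsto_zero]
      refine squeeze_zero (f := fun n : ℕ => ‖F n - f‖)
        (g := fun n : ℕ => 1 / ((n : ℝ) + 1) * ‖t.comp T'‖)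
        (fun n => norm_nonneg _)
        (fun n => le_trans (le_of_eq (norm_sub_rev _ _)) (hnorm n)) ?_
      simpa using htend.mul_const ‖t.comp T'‖
    exact isCompactOperator_of_tendsto hlim (Filter.Eventually.of_forall hFc)
  · -- (T t T*) ∘ χ_B is compact
    set g := ((T.comp t).comp T').comp (MY.proj B) with hg
    set G : ℕ → HY →L[ℂ] HY :=
      fun n => ((T.comp (t.comp (MX.proj (A n)))).comp T').comp (MY.proj B) with hG
    have hGc : ∀ n, IsCompactOperator (G n) := by
      intro n
      have h1 : IsCompactOperator ⇑(t.comp (MX.proj (A n))) := (ht (A n) (hAm n) (hAb n)).2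
      have h2 := (h1.clm_comp T).comp_clm (T'.comp (MY.proj B))
      have : ⇑(G n) = ⇑T ∘ ⇑(t.comp (MX.proj (A n))) ∘ ⇑(T'.comp (MY.proj B)) := by
        ext v; simp [hG, ContinuousLinearMap.comp_apply]
      rw [this]; exact h2
    have hsub : ∀ n, g - G n =
        ((T.comp (t.comp (1 - MX.proj (A n)))).comp T').comp (MY.proj B) := by
      intro n
      ext v
      simp [hg, hG, ContinuousLinearMap.comp_apply, ContinuousLinearMap.sub_apply,
        map_sub]
    have hnorm : ∀ n, ‖g - G n‖ ≤
        1 / ((n : ℝ) + 1) * ‖(ContinuousLinearMap.adjoint t).comp (ContinuousLinearMap.adjoint T)‖ := by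
      intro n
      rw [hsub n]
      have hadj : ContinuousLinearMap.adjoint
          (((T.comp (t.comp (1 - MX.proj (A n)))).comp T').comp (MY.proj B)) =
          ((((MY.proj B).comp T).comp (1 - MX.proj (A n))).comp
            ((ContinuousLinearMap.adjoint t).comp (ContinuousLinearMap.adjoint T))) := by
        simp only [ContinuousLinearMap.adjoint_comp, hPB, hPA, hT'def,
          ContinuousLinearMap.adjoint_adjoint]
        ext v; simp [ContinuousLinearMap.comp_apply]
      have hnormeq : ‖((T.comp (t.comp (1 - MX.proj (A n)))).comp T').comp (MY.proj B)‖ =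
          ‖ContinuousLinearMap.adjoint
            (((T.comp (t.comp (1 - MX.proj (A n)))).comp T').comp (MY.proj B))‖ :=
        (ContinuousLinearMap.adjoint.norm_map _).symm
      rw [hnormeq, hadj]
      calc ‖(((MY.proj B).comp T).comp (1 - MX.proj (A n))).comp
              ((ContinuousLinearMap.adjoint t).comp (ContinuousLinearMap.adjoint T))‖
          ≤ ‖((MY.proj B).comp T).comp (1 - MX.proj (A n))‖ *
              ‖(ContinuousLinearMap.adjoint t).comp (ContinuousLinearMap.adjoint T)‖ :=
            ContinuousLinearMap.opNorm_comp_le _ _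
        _ ≤ _ := mul_le_mul_of_nonneg_right (hAn n) (norm_nonneg _)
    have hlim : Tendsto G atTop (𝓝 g) := by
      rw [tendsto_iff_norm_sub_tendsto_zero]
      refine squeeze_zero (f := fun n : ℕ => ‖G n - g‖)
        (g := fun n : ℕ => 1 / ((n : ℝ) + 1) *
          ‖(ContinuousLinearMap.adjoint t).comp (ContinuousLinearMap.adjoint T)‖)
        (fun n => norm_nonneg _)
        (fun n => le_trans (le_of_eq (norm_sub_rev _ _)) (hnorm n)) ?_
      simpa using htend.mul_const
        ‖(ContinuousLinearMap.adjoint t).comp (ContinuousLinearMap.adjoint T)‖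
    exact isCompactOperator_of_tendsto hlim (Filter.Eventually.of_forall hGc)
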